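/- arXiv:2302.06205 — 3 statements merged into one kernel-verified Lean document; each statement's English description precedes it below -/
import Mathlib

section
/- Multi-agent policy performance difference: for joint policies π̂ and π on a finite discounted MDP, J(π̂) − J(π) = (1/(1−γ)) E_{s ∼ d^{π̂}, a ∼ π̂(·|s)}[A^π(s, a)], where d^{π̂}(s) = (1−γ) ∑_{t≥0} γ^t Pr(s_t = s | π̂) is the normalized discounted state-visitation distribution and A^π is the advantage function of π. -/
/-!
Let `d_t` be the state distribution of `π̂` at time `t` and `f_t = E_{s ∼ d_t} V^π(s)`. Averaging
the advantage of `π` over `s ∼ d_t, a ∼ π̂(·|s)` gives the one-step reward of `π̂` plus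
`γ f_{t+1} - f_t`, because `d_{t+1}` is `d_t` pushed one step along the chain of `π̂`. Summing with
weights `γ^t` (which is `(1 - γ)⁻¹ E_{s ∼ d^{π̂}}`), the rewards add up to `J(π̂)` and the
`f`-terms telescope to `-f_0 = -E_{s ∼ ρ} V^π(s) = -J(π)`.
-/

open scoped BigOperators

namespace A2PO

/-- A finite discounted MDP with a fixed initial state distribution. -/
structure MDP (S A : Type) [Fintype S] [Fintype A] where
  /-- transition kernel -/
  T : S → A → S → ℝ
  T_nonneg : ∀ s a s', 0 ≤ T s a s'
  T_sum : ∀ s a, ∑ s', T s a s' = 1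
  /-- reward function -/
  r : S → A → ℝ
  /-- discount factor -/
  γ : ℝ
  γ_nonneg : 0 ≤ γ
  γ_lt_one : γ < 1
  /-- initial state distribution -/
  ρ : S → ℝ
  ρ_nonneg : ∀ s, 0 ≤ ρ s
  ρ_sum : ∑ s, ρ s = 1

variable {S A : Type} [Fintype S] [Fintype A] [DecidableEq S] [Nonempty S] [Nonempty A]

/-- A (joint) policy: a probability distribution over actions at each state. -/
def IsPolicy (π : S → A → ℝ) : Prop :=
  (∀ s a, 0 ≤ π s a) ∧ ∀ s, ∑ a, π s a = 1

/-- One step of the state-distribution evolution under policy `π`. -/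
noncomputable def stepDist (M : MDP S A) (π : S → A → ℝ) (p : S → ℝ) : S → ℝ :=
  fun s' => ∑ s, ∑ a, p s * π s a * M.T s a s'

/-- The state distribution at time `t` under policy `π`, `Pr(s_t = s | π)`. -/
noncomputable def stateDist (M : MDP S A) (π : S → A → ℝ) : ℕ → S → ℝ
  | 0 => M.ρ
  | t + 1 => stepDist M π (stateDist M π t)

/-- The state distribution at time `t` under `π`, starting from state `s0`. -/
noncomputable def stateDistFrom (M : MDP S A) (π : S → A → ℝ) (s0 : S) : ℕ → S → ℝ
  | 0 => fun s => if s = s0 then 1 else 0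
  | t + 1 => stepDist M π (stateDistFrom M π s0 t)

/-- Expected one-step reward of `π` under state distribution `p`. -/
noncomputable def expReward (M : MDP S A) (π : S → A → ℝ) (p : S → ℝ) : ℝ :=
  ∑ s, p s * ∑ a, π s a * M.r s a

/-- The value function `V^π(s)`. -/
noncomputable def V (M : MDP S A) (π : S → A → ℝ) (s0 : S) : ℝ :=
  ∑' t : ℕ, M.γ ^ t * expReward M π (stateDistFrom M π s0 t)

/-- The advantage function `A^π(s,a)`. -/
noncomputable def Adv (M : MDP S A) (π : S → A → ℝ) (s : S) (a : A) : ℝ :=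
  M.r s a + M.γ * (∑ s', M.T s a s' * V M π s') - V M π s

/-- The expected discounted return `J(π)`. -/
noncomputable def J (M : MDP S A) (π : S → A → ℝ) : ℝ :=
  ∑' t : ℕ, M.γ ^ t * expReward M π (stateDist M π t)

/-- The normalized discounted state-visitation distribution `d^π`. -/
noncomputable def visit (M : MDP S A) (π : S → A → ℝ) (s : S) : ℝ :=
  (1 - M.γ) * ∑' t : ℕ, M.γ ^ t * stateDist M π t s

/-- Total variation distance between two distributions on a finite set. -/
noncomputable def tv (p q : A → ℝ) : ℝ := (1 / 2) * ∑ a, |p a - q a|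

/-- Maximal (over states) total variation distance between two policies. -/
noncomputable def tvMax (p q : S → A → ℝ) : ℝ := ⨆ s : S, tv (p s) (q s)

end A2PO

open Matrix

theorem abs_dotProduct_le_norm {n : Type*} [Fintype n] {x : n → ℝ} (hx0 : ∀ i, 0 ≤ x i)
    (hx1 : ∑ i, x i = 1) (g : n → ℝ) : |x ⬝ᵥ g| ≤ ‖g‖ :=
  calc |x ⬝ᵥ g| ≤ ∑ i, |x i * g i| := Finset.abs_sum_le_sum_abs _ _
    _ ≤ ∑ i, x i * ‖g‖ := Finset.sum_le_sum fun i _ => by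
        rw [abs_mul, abs_of_nonneg (hx0 i), ← Real.norm_eq_abs]
        exact mul_le_mul_of_nonneg_left (norm_le_pi_norm g i) (hx0 i)
    _ = ‖g‖ := by rw [← Finset.sum_mul, hx1, one_mul]

theorem Matrix.norm_mulVec_le_of_mem_rowStochastic {n : Type*} [Fintype n] [DecidableEq n]
    {Q : Matrix n n ℝ} (hQ : Q ∈ rowStochastic ℝ n) (g : n → ℝ) : ‖Q *ᵥ g‖ ≤ ‖g‖ :=
  (pi_norm_le_iff_of_nonneg (norm_nonneg g)).2 fun i =>
    abs_dotProduct_le_norm (fun j => hQ.1 i j) (sum_row_of_mem_rowStochastic hQ i) g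

theorem summable_pow_mul_of_abs_le {γ C : ℝ} (hγ0 : 0 ≤ γ) (hγ1 : γ < 1) {u : ℕ → ℝ}
    (hu : ∀ t, |u t| ≤ C) : Summable fun t => γ ^ t * u t :=
  ((summable_geometric_of_lt_one hγ0 hγ1).mul_right C).of_norm_bounded fun t => by
    rw [Real.norm_eq_abs, abs_mul, abs_pow, abs_of_nonneg hγ0]
    exact mul_le_mul_of_nonneg_left (hu t) (pow_nonneg hγ0 t)

theorem tsum_succ_sub_eq_neg {α : Type*} [AddCommGroup α] [TopologicalSpace α]
    [IsTopologicalAddGroup α] [T2Space α] {h : ℕ → α} (hh : Summable h) :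
    ∑' t, (h (t + 1) - h t) = -h 0 := by
  rw [((summable_nat_add_iff 1).2 hh).tsum_sub hh, hh.tsum_eq_zero_add]
  abel

namespace A2PO

variable {S A : Type} [Fintype S] [Fintype A]

def transitionMatrix (M : MDP S A) (π : S → A → ℝ) : Matrix S S ℝ :=
  Matrix.of fun s s' => ∑ a, π s a * M.T s a s'

def policyReward (M : MDP S A) (π : S → A → ℝ) : S → ℝ :=
  fun s => ∑ a, π s a * M.r s a

def advantage (M : MDP S A) (v : S → ℝ) (s : S) (a : A) : ℝ :=
  M.r s a + M.γ * (∑ s', M.T s a s' * v s') - v s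

variable (M : MDP S A) {π : S → A → ℝ}

theorem stepDist_eq_vecMul (π : S → A → ℝ) (p : S → ℝ) :
    stepDist M π p = p ᵥ* transitionMatrix M π := by
  ext s'
  simp only [stepDist, vecMul, dotProduct, transitionMatrix, of_apply, Finset.mul_sum, mul_assoc]

theorem expReward_eq_dotProduct (π : S → A → ℝ) (p : S → ℝ) :
    expReward M π p = p ⬝ᵥ policyReward M π :=
  rfl

theorem sum_mul_advantage (hπ : IsPolicy π) (v : S → ℝ) (s : S) :
    ∑ a, π s a * advantage M v s a
      = (policyReward M π + M.γ • (transitionMatrix M π *ᵥ v) - v) s := by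
  simp only [advantage, mul_sub, mul_add, Finset.sum_sub_distrib, Finset.sum_add_distrib,
    ← Finset.sum_mul, hπ.2 s, one_mul]
  simp only [policyReward, transitionMatrix, mulVec, dotProduct, of_apply, Pi.sub_apply,
    Pi.add_apply, Pi.smul_apply, smul_eq_mul, Finset.mul_sum, Finset.sum_mul]
  rw [Finset.sum_comm]
  congr 2
  exact Finset.sum_congr rfl fun s' _ => Finset.sum_congr rfl fun a _ => by ring

variable [DecidableEq S]

theorem Adv_eq_advantage (π : S → A → ℝ) : Adv M π = advantage M (V M π) :=
  rfl

theorem transitionMatrix_mem_rowStochastic (hπ : IsPolicy π) :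
    transitionMatrix M π ∈ rowStochastic ℝ S := by
  refine mem_rowStochastic_iff_sum.2 ⟨fun s s' => ?_, fun s => ?_⟩
  · exact Finset.sum_nonneg fun a _ => mul_nonneg (hπ.1 s a) (M.T_nonneg s a s')
  · simp only [transitionMatrix, of_apply]
    rw [Finset.sum_comm]
    simp only [← Finset.mul_sum, M.T_sum, mul_one, hπ.2]

theorem stateDist_eq_vecMul_pow (π : S → A → ℝ) (t : ℕ) :
    stateDist M π t = M.ρ ᵥ* transitionMatrix M π ^ t := by
  induction t with
  | zero => exact (vecMul_one _).symm
  | succ t ih => rw [stateDist, stepDist_eq_vecMul, ih, vecMul_vecMul, pow_succ]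

theorem stateDistFrom_eq_vecMul_pow (π : S → A → ℝ) (s0 : S) (t : ℕ) :
    stateDistFrom M π s0 t = Pi.single s0 1 ᵥ* transitionMatrix M π ^ t := by
  induction t with
  | zero =>
    ext s
    simp [stateDistFrom, Pi.single_apply]
  | succ t ih => rw [stateDistFrom, stepDist_eq_vecMul, ih, vecMul_vecMul, pow_succ]

theorem J_eq_tsum (π : S → A → ℝ) :
    J M π = ∑' t, M.γ ^ t * M.ρ ⬝ᵥ (transitionMatrix M π ^ t *ᵥ policyReward M π) := by
  simp only [J, expReward_eq_dotProduct, stateDist_eq_vecMul_pow, dotProduct_mulVec]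

theorem V_eq_tsum (π : S → A → ℝ) (s0 : S) :
    V M π s0 = ∑' t, M.γ ^ t * (transitionMatrix M π ^ t *ᵥ policyReward M π) s0 := by
  simp only [V, expReward_eq_dotProduct, stateDistFrom_eq_vecMul_pow, ← dotProduct_mulVec,
    single_dotProduct, one_mul]

theorem J_eq_dotProduct_V (hπ : IsPolicy π) : J M π = M.ρ ⬝ᵥ V M π := by
  have hsum (s0 : S) : Summable fun t =>
      M.γ ^ t * (transitionMatrix M π ^ t *ᵥ policyReward M π) s0 :=
    summable_pow_mul_of_abs_le M.γ_nonneg M.γ_lt_one fun t =>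
      (norm_le_pi_norm _ s0).trans <| norm_mulVec_le_of_mem_rowStochastic
        (pow_mem (transitionMatrix_mem_rowStochastic M hπ) t) _
  simp only [J_eq_tsum, dotProduct, V_eq_tsum, ← tsum_mul_left,
    ← Summable.tsum_finsetSum fun s0 _ => (hsum s0).mul_left (M.ρ s0), Finset.mul_sum]
  exact tsum_congr fun t => Finset.sum_congr rfl fun s0 _ => by ring

theorem summable_pow_mul_stateDist_dotProduct (hπ : IsPolicy π) (g : S → ℝ) :
    Summable fun t => M.γ ^ t * (stateDist M π t ⬝ᵥ g) :=
  summable_pow_mul_of_abs_le M.γ_nonneg M.γ_lt_one fun t => by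
    rw [stateDist_eq_vecMul_pow, ← dotProduct_mulVec]
    exact (abs_dotProduct_le_norm M.ρ_nonneg M.ρ_sum _).trans <|
      norm_mulVec_le_of_mem_rowStochastic (pow_mem (transitionMatrix_mem_rowStochastic M hπ) t) g

theorem sum_visit_mul (hπ : IsPolicy π) (g : S → ℝ) :
    ∑ s, visit M π s * g s = (1 - M.γ) * ∑' t, M.γ ^ t * (stateDist M π t ⬝ᵥ g) := by
  have hsum (s : S) : Summable fun t => M.γ ^ t * (stateDist M π t s * g s) := by
    simpa only [dotProduct_single_one, mul_assoc] using
      (summable_pow_mul_stateDist_dotProduct M hπ (Pi.single s 1)).mul_right (g s)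
  simp only [visit, mul_assoc, ← Finset.mul_sum, ← tsum_mul_right]
  rw [← Summable.tsum_finsetSum fun s _ => hsum s]
  simp only [dotProduct, Finset.mul_sum]

theorem sum_visit_mul_advantage (hπ : IsPolicy π) (v : S → ℝ) :
    ∑ s, visit M π s * ∑ a, π s a * advantage M v s a = (1 - M.γ) * (J M π - M.ρ ⬝ᵥ v) := by
  set h : ℕ → ℝ := fun t => M.γ ^ t * (stateDist M π t ⬝ᵥ v)
  have hstep (t : ℕ) : M.γ ^ t * (stateDist M π t ⬝ᵥ
        (policyReward M π + M.γ • (transitionMatrix M π *ᵥ v) - v))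
      = M.γ ^ t * (stateDist M π t ⬝ᵥ policyReward M π) + (h (t + 1) - h t) := by
    simp only [h, stateDist, stepDist_eq_vecMul, dotProduct_add, dotProduct_sub,
      dotProduct_smul, ← dotProduct_mulVec, smul_eq_mul]
    ring
  have hh : Summable h := summable_pow_mul_stateDist_dotProduct M hπ v
  simp only [sum_mul_advantage M hπ, sum_visit_mul M hπ, hstep]
  rw [(summable_pow_mul_stateDist_dotProduct M hπ _).tsum_add
      (((summable_nat_add_iff 1).2 hh).sub hh), tsum_succ_sub_eq_neg hh]
  simp only [J, expReward_eq_dotProduct, h, pow_zero, one_mul, stateDist, sub_eq_add_neg]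

end A2PO

namespace A2PO

variable {S A : Type} [Fintype S] [Fintype A] [DecidableEq S] [Nonempty S] [Nonempty A]

/-- Multi-agent policy performance difference lemma:
`J(π̂) − J(π) = (1/(1−γ)) E_{s∼d^{π̂}, a∼π̂}[A^π(s,a)]`. -/
theorem performance_difference (M : MDP S A) (π πh : S → A → ℝ)
    (hπ : IsPolicy π) (hπh : IsPolicy πh) :
    J M πh - J M π
      = (1 / (1 - M.γ)) * ∑ s, visit M πh s * ∑ a, πh s a * Adv M π s a := by
  have hγ : 1 - M.γ ≠ 0 := (sub_pos.2 M.γ_lt_one).ne'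
  rw [Adv_eq_advantage, sum_visit_mul_advantage M hπh, J_eq_dotProduct_V M hπ]
  field_simp

end A2PO
end

section
/- Multi-agent advantage discrepancy: for joint policies π¹, π², π³ on a finite MDP, with ε = max_{s,a} |A^{π¹}(s,a)|, |E_{s_t ∼ Pr^{π²}, a_t ∼ π²}[A^{π¹}(s_t, a_t)] − E_{s_t ∼ Pr^{π³}, a_t ∼ π²}[A^{π¹}(s_t, a_t)]| ≤ 4 ε · D_TV^max(π¹‖π²) · (1 − (1 − D_TV^max(π²‖π³))^t), where Pr^π denotes the state distribution at time t when acting by π from the initial distribution. -/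
open scoped BigOperators

/-!
The advantage of `π¹` has mean zero under `π¹` itself (Bellman equation), so its mean under
`π²` is an expectation of `A^{π¹}` against the signed measure `π² - π¹` and is bounded by
`2 ε D_TV^max(π¹‖π²)` at every state. The two quantities being compared are expectations of
this bounded function under the state distributions of `π²` and `π³` at time `t`, so they differ
by at most twice its bound times the total variation distance of those distributions. That
distance is at most `1 - (1 - D_TV^max(π²‖π³))^t`: rolling out the sub-stochastic policy
`min(π², π³)` gives a common lower bound of both state distributions that loses at most a
fraction `D_TV^max(π²‖π³)` of its mass per step.
-/

namespace A2PO

section TotalVariation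

variable {ι : Type} [Fintype ι]

lemma tv_nonneg (p q : ι → ℝ) : 0 ≤ tv p q := by
  unfold tv
  positivity

lemma sum_min_eq_one_sub_tv {p q : ι → ℝ} (hp : ∑ i, p i = 1) (hq : ∑ i, q i = 1) :
    ∑ i, min (p i) (q i) = 1 - tv p q := by
  have h : ∀ i, min (p i) (q i) = (p i + q i - |p i - q i|) / 2 := fun i => by
    linarith [min_add_max (p i) (q i), max_sub_min_eq_abs' (p i) (q i)]
  rw [Finset.sum_congr rfl fun i _ => h i, ← Finset.sum_div, Finset.sum_sub_distrib,
    Finset.sum_add_distrib, hp, hq, tv]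
  ring

lemma tv_le_one {p q : ι → ℝ} (hp0 : 0 ≤ p) (hq0 : 0 ≤ q) (hp : ∑ i, p i = 1)
    (hq : ∑ i, q i = 1) : tv p q ≤ 1 := by
  have : 0 ≤ ∑ i, min (p i) (q i) := Finset.sum_nonneg fun i _ => le_min (hp0 i) (hq0 i)
  linarith [sum_min_eq_one_sub_tv hp hq]

lemma abs_sum_mul_sub_sum_mul_le {p q f : ι → ℝ} {C : ℝ} (hf : ∀ i, |f i| ≤ C) :
    |∑ i, p i * f i - ∑ i, q i * f i| ≤ 2 * tv p q * C := by
  rw [← Finset.sum_sub_distrib]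
  calc |∑ i, (p i * f i - q i * f i)| ≤ ∑ i, |p i - q i| * C :=
        (Finset.abs_sum_le_sum_abs _ _).trans <| Finset.sum_le_sum fun i _ => by
          rw [← sub_mul, abs_mul]
          exact mul_le_mul_of_nonneg_left (hf i) (abs_nonneg _)
    _ = 2 * tv p q * C := by rw [← Finset.sum_mul, tv]; ring

lemma abs_sum_mul_le_of_abs_le {p f : ι → ℝ} {C : ℝ} (hp0 : 0 ≤ p) (hp : ∑ i, p i = 1)
    (hf : ∀ i, |f i| ≤ C) : |∑ i, p i * f i| ≤ C :=
  calc |∑ i, p i * f i| ≤ ∑ i, p i * C :=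
        (Finset.abs_sum_le_sum_abs _ _).trans <| Finset.sum_le_sum fun i _ => by
          rw [abs_mul, abs_of_nonneg (hp0 i)]
          exact mul_le_mul_of_nonneg_left (hf i) (hp0 i)
    _ = C := by rw [← Finset.sum_mul, hp, one_mul]

end TotalVariation

section

variable {S A : Type} [Fintype A]

lemma tvMax_nonneg (p q : S → A → ℝ) : 0 ≤ tvMax p q :=
  Real.iSup_nonneg fun _ => tv_nonneg _ _

lemma tvMax_le_one {p q : S → A → ℝ} (hp : IsPolicy p) (hq : IsPolicy q) : tvMax p q ≤ 1 :=
  Real.iSup_le (fun s => tv_le_one (hp.1 s) (hq.1 s) (hp.2 s) (hq.2 s)) zero_le_one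

end

variable {S A : Type} [Fintype S] [Fintype A]

lemma tv_le_tvMax (p q : S → A → ℝ) (s : S) : tv (p s) (q s) ≤ tvMax p q :=
  le_ciSup (Set.finite_range fun s => tv (p s) (q s)).bddAbove s

section StateDistribution

variable (M : MDP S A) {π π' : S → A → ℝ} {p p' : S → ℝ}

lemma stepDist_nonneg (hπ : 0 ≤ π) (hp : 0 ≤ p) : 0 ≤ stepDist M π p := fun s' =>
  Finset.sum_nonneg fun s _ => Finset.sum_nonneg fun a _ =>
    mul_nonneg (mul_nonneg (hp s) (hπ s a)) (M.T_nonneg s a s')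

lemma stepDist_mono (hπ : 0 ≤ π) (hππ' : π ≤ π') (hp : 0 ≤ p) (hpp' : p ≤ p') :
    stepDist M π p ≤ stepDist M π' p' := fun s' =>
  Finset.sum_le_sum fun s _ => Finset.sum_le_sum fun a _ =>
    mul_le_mul_of_nonneg_right
      (mul_le_mul (hpp' s) (hππ' s a) (hπ s a) ((hp s).trans (hpp' s))) (M.T_nonneg s a s')

lemma sum_stepDist (π : S → A → ℝ) (p : S → ℝ) :
    ∑ s', stepDist M π p s' = ∑ s, p s * ∑ a, π s a := by
  simp only [stepDist, Finset.mul_sum]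
  rw [Finset.sum_comm]
  refine Finset.sum_congr rfl fun s _ => ?_
  rw [Finset.sum_comm]
  refine Finset.sum_congr rfl fun a _ => ?_
  rw [← Finset.mul_sum, M.T_sum, mul_one]

lemma stateDist_nonneg (hπ : 0 ≤ π) : ∀ t, 0 ≤ stateDist M π t
  | 0 => M.ρ_nonneg
  | t + 1 => stepDist_nonneg M hπ (stateDist_nonneg hπ t)

lemma sum_stateDist (hπ : IsPolicy π) : ∀ t, ∑ s, stateDist M π t s = 1
  | 0 => M.ρ_sum
  | t + 1 => by simp only [stateDist, sum_stepDist, hπ.2, mul_one, sum_stateDist hπ t]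

lemma stateDist_mono (hπ : 0 ≤ π) (hππ' : π ≤ π') : ∀ t, stateDist M π t ≤ stateDist M π' t
  | 0 => le_rfl
  | t + 1 => stepDist_mono M hπ hππ' (stateDist_nonneg M hπ t) (stateDist_mono hπ hππ' t)

lemma pow_le_sum_stateDist {c : ℝ} (hπ : 0 ≤ π) (hc0 : 0 ≤ c) (hc : ∀ s, c ≤ ∑ a, π s a) :
    ∀ t, c ^ t ≤ ∑ s, stateDist M π t s
  | 0 => by simp [stateDist, M.ρ_sum]
  | t + 1 =>
    calc c ^ (t + 1) ≤ (∑ s, stateDist M π t s) * c :=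
          pow_succ c t ▸ mul_le_mul_of_nonneg_right (pow_le_sum_stateDist hπ hc0 hc t) hc0
      _ ≤ ∑ s, stateDist M π t s * ∑ a, π s a := by
          rw [Finset.sum_mul]
          exact Finset.sum_le_sum fun s _ =>
            mul_le_mul_of_nonneg_left (hc s) (stateDist_nonneg M hπ t s)
      _ = ∑ s, stateDist M π (t + 1) s := (sum_stepDist M π _).symm

theorem tv_stateDist_le (hπ : IsPolicy π) (hπ' : IsPolicy π') (t : ℕ) :
    tv (stateDist M π t) (stateDist M π' t) ≤ 1 - (1 - tvMax π π') ^ t := by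
  set m : S → A → ℝ := fun s a => min (π s a) (π' s a)
  have hm0 : 0 ≤ m := fun s a => le_min (hπ.1 s a) (hπ'.1 s a)
  have hmass : ∀ s, 1 - tvMax π π' ≤ ∑ a, m s a := fun s => by
    rw [sum_min_eq_one_sub_tv (hπ.2 s) (hπ'.2 s)]
    linarith [tv_le_tvMax π π' s]
  have hlow : (1 - tvMax π π') ^ t ≤ ∑ s, min (stateDist M π t s) (stateDist M π' t s) :=
    (pow_le_sum_stateDist M hm0 (sub_nonneg.2 (tvMax_le_one hπ hπ')) hmass t).trans <|
      Finset.sum_le_sum fun s _ => le_min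
        (stateDist_mono M hm0 (fun s a => min_le_left _ _) t s)
        (stateDist_mono M hm0 (fun s a => min_le_right _ _) t s)
  rw [sum_min_eq_one_sub_tv (sum_stateDist M hπ t) (sum_stateDist M hπ' t)] at hlow
  linarith

end StateDistribution

section Advantage

variable [DecidableEq S] (M : MDP S A) {π : S → A → ℝ}

def transMatrix (π : S → A → ℝ) : Matrix S S ℝ := fun s s' => ∑ a, π s a * M.T s a s'

lemma stateDistFrom_eq_pow (π : S → A → ℝ) (s0 : S) :
    ∀ t s, stateDistFrom M π s0 t s = (transMatrix M π ^ t) s0 s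
  | 0, s => by simp [stateDistFrom, Matrix.one_apply, eq_comm]
  | t + 1, s => by
    simp only [stateDistFrom, stepDist, pow_succ, Matrix.mul_apply, transMatrix, Finset.mul_sum,
      stateDistFrom_eq_pow π s0 t, mul_assoc]

lemma stateDistFrom_succ (π : S → A → ℝ) (s0 : S) (t : ℕ) (s : S) :
    stateDistFrom M π s0 (t + 1) s = ∑ s1, transMatrix M π s0 s1 * stateDistFrom M π s1 t s := by
  simp only [stateDistFrom_eq_pow, pow_succ', Matrix.mul_apply]

lemma expReward_stateDistFrom_succ (π : S → A → ℝ) (s0 : S) (t : ℕ) :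
    expReward M π (stateDistFrom M π s0 (t + 1))
      = ∑ s1, transMatrix M π s0 s1 * expReward M π (stateDistFrom M π s1 t) := by
  simp only [expReward, stateDistFrom_succ, Finset.sum_mul]
  rw [Finset.sum_comm]
  refine Finset.sum_congr rfl fun s1 _ => ?_
  rw [Finset.mul_sum]
  simp only [mul_assoc]

lemma stateDistFrom_nonneg (hπ : 0 ≤ π) (s0 : S) : ∀ t, 0 ≤ stateDistFrom M π s0 t
  | 0 => fun s => by simp only [stateDistFrom]; positivity
  | t + 1 => stepDist_nonneg M hπ (stateDistFrom_nonneg hπ s0 t)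

lemma sum_stateDistFrom (hπ : IsPolicy π) (s0 : S) : ∀ t, ∑ s, stateDistFrom M π s0 t s = 1
  | 0 => by simp [stateDistFrom]
  | t + 1 => by simp only [stateDistFrom, sum_stepDist, hπ.2, mul_one, sum_stateDistFrom hπ s0 t]

lemma summable_V (hπ : IsPolicy π) (s0 : S) :
    Summable fun t => M.γ ^ t * expReward M π (stateDistFrom M π s0 t) := by
  refine Summable.of_norm_bounded
    ((summable_geometric_of_lt_one M.γ_nonneg M.γ_lt_one).mul_right (∑ s, |∑ a, π s a * M.r s a|))
    fun t => ?_
  rw [Real.norm_eq_abs, abs_mul, abs_pow, abs_of_nonneg M.γ_nonneg]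
  refine mul_le_mul_of_nonneg_left ?_ (pow_nonneg M.γ_nonneg t)
  exact abs_sum_mul_le_of_abs_le (stateDistFrom_nonneg M hπ.1 s0 t) (sum_stateDistFrom M hπ s0 t)
    fun s => Finset.single_le_sum (f := fun s => |∑ a, π s a * M.r s a|)
      (fun _ _ => abs_nonneg _) (Finset.mem_univ s)

theorem V_eq_bellman (hπ : IsPolicy π) (s0 : S) :
    V M π s0 = ∑ a, π s0 a * M.r s0 a + M.γ * ∑ s1, transMatrix M π s0 s1 * V M π s1 := by
  rw [V, (summable_V M hπ s0).tsum_eq_zero_add]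
  have hshift : ∀ t s1, M.γ ^ (t + 1) * (transMatrix M π s0 s1 *
      expReward M π (stateDistFrom M π s1 t))
        = M.γ * transMatrix M π s0 s1 * (M.γ ^ t * expReward M π (stateDistFrom M π s1 t)) :=
    fun _ _ => by ring
  simp only [expReward_stateDistFrom_succ, Finset.mul_sum, hshift]
  rw [Summable.tsum_finsetSum fun s1 _ => (summable_V M hπ s1).mul_left _]
  simp only [tsum_mul_left, V, mul_assoc]
  congr 1
  simp [expReward, stateDistFrom]

lemma sum_mul_Adv_self (hπ : IsPolicy π) (s : S) : ∑ a, π s a * Adv M π s a = 0 := by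
  have hnext : ∑ a, π s a * (M.γ * ∑ s', M.T s a s' * V M π s')
      = M.γ * ∑ s1, transMatrix M π s s1 * V M π s1 := by
    simp only [transMatrix, Finset.sum_mul, Finset.mul_sum]
    rw [Finset.sum_comm]
    exact Finset.sum_congr rfl fun _ _ => Finset.sum_congr rfl fun _ _ => by ring
  simp only [Adv, mul_sub, mul_add, Finset.sum_sub_distrib, Finset.sum_add_distrib, hnext,
    ← Finset.sum_mul, hπ.2, one_mul]
  rw [← V_eq_bellman M hπ, sub_self]

lemma abs_sum_mul_Adv_le (hπ : IsPolicy π) {ε : ℝ} (hε : ∀ s a, |Adv M π s a| ≤ ε)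
    (π' : S → A → ℝ) (s : S) : |∑ a, π' s a * Adv M π s a| ≤ 2 * tv (π s) (π' s) * ε := by
  have h := abs_sum_mul_sub_sum_mul_le (p := π s) (q := π' s) (hε s)
  rwa [sum_mul_Adv_self M hπ, zero_sub, abs_neg] at h

end Advantage

variable [DecidableEq S] [Nonempty S] [Nonempty A]

/-- Multi-agent advantage discrepancy lemma: the difference between the
expected advantage of `π¹` at time `t`, with states from rolling out `π²`
versus `π³` and actions from `π²` in both, is bounded by
`4ε · D_TV^max(π¹‖π²) · (1 − (1 − D_TV^max(π²‖π³))^t)`. -/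
theorem advantage_discrepancy (M : MDP S A) (π1 π2 π3 : S → A → ℝ)
    (h1 : IsPolicy π1) (h2 : IsPolicy π2) (h3 : IsPolicy π3)
    (ε : ℝ) (hε : ε = ⨆ s : S, ⨆ a : A, |Adv M π1 s a|) (t : ℕ) :
    |(∑ s, stateDist M π2 t s * ∑ a, π2 s a * Adv M π1 s a)
        - ∑ s, stateDist M π3 t s * ∑ a, π2 s a * Adv M π1 s a|
      ≤ 4 * ε * tvMax π1 π2 * (1 - (1 - tvMax π2 π3) ^ t) := by
  have hAdv : ∀ s a, |Adv M π1 s a| ≤ ε := fun s a => hε ▸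
    (le_ciSup (Set.finite_range fun a => |Adv M π1 s a|).bddAbove a).trans
      (le_ciSup (Set.finite_range fun s => ⨆ a, |Adv M π1 s a|).bddAbove s)
  have hε0 : 0 ≤ ε := (abs_nonneg _).trans (hAdv (Classical.arbitrary S) (Classical.arbitrary A))
  have hstate : ∀ s, |∑ a, π2 s a * Adv M π1 s a| ≤ 2 * ε * tvMax π1 π2 := fun s =>
    (abs_sum_mul_Adv_le M h1 hAdv π2 s).trans <| by nlinarith [tv_le_tvMax π1 π2 s]
  calc _ ≤ 2 * tv (stateDist M π2 t) (stateDist M π3 t) * (2 * ε * tvMax π1 π2) :=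
        abs_sum_mul_sub_sum_mul_le hstate
    _ ≤ 2 * (1 - (1 - tvMax π2 π3) ^ t) * (2 * ε * tvMax π1 π2) := by
        have := tvMax_nonneg π1 π2
        gcongr
        exact tv_stateDist_le M h2 h3 t
    _ = 4 * ε * tvMax π1 π2 * (1 - (1 - tvMax π2 π3) ^ t) := by ring

end A2PO
end

section
/- MAPPO-style bound combination: suppose real numbers D, L_1, …, L_n, ε ≥ 0, α_1, …, α_n ≥ 0 satisfy |D − L_i| ≤ (2ε/(1−γ))(α_i + ∑_{j=1}^n α_j) for each i and |L_i| ≤ 2ε α_i/(1−γ). Then |D − ∑_{i=1}^n L_i| ≤ (4ε/(1−γ)) ∑_{i=1}^n α_i. -/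
/-!
Multiply by `n`: `n (D - ∑ L_i) = ∑ (D - L_i) - (n - 1) ∑ L_i`. The per-agent bounds control
the first sum by `c (S + n S)` and `|L_i| ≤ c α_i` controls the second by `(n - 1) c S`, where
`c = 2ε/(1-γ)` and `S = ∑ α_i`; together this is `2 n c S`.
-/

open Finset

theorem card_mul_abs_sub_sum_le {ι : Type*} {s : Finset ι} (hs : s.Nonempty) (D : ℝ)
    (L : ι → ℝ) :
    (#s : ℝ) * |D - ∑ i ∈ s, L i|
      ≤ ∑ i ∈ s, |D - L i| + ((#s : ℝ) - 1) * ∑ i ∈ s, |L i| := by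
  have hcard : (0 : ℝ) ≤ #s - 1 := sub_nonneg.2 (by exact_mod_cast hs.card_pos)
  have hsplit : (#s : ℝ) * (D - ∑ i ∈ s, L i)
      = ∑ i ∈ s, (D - L i) - ((#s : ℝ) - 1) * ∑ i ∈ s, L i := by
    rw [sum_sub_distrib, sum_const, nsmul_eq_mul]
    ring
  calc (#s : ℝ) * |D - ∑ i ∈ s, L i|
      = |∑ i ∈ s, (D - L i) - ((#s : ℝ) - 1) * ∑ i ∈ s, L i| := by
        rw [← hsplit, abs_mul, Nat.abs_cast]
    _ ≤ |∑ i ∈ s, (D - L i)| + ((#s : ℝ) - 1) * |∑ i ∈ s, L i| :=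
        (abs_sub _ _).trans_eq (by rw [abs_mul, abs_of_nonneg hcard])
    _ ≤ ∑ i ∈ s, |D - L i| + ((#s : ℝ) - 1) * ∑ i ∈ s, |L i| := by
        gcongr <;> exact abs_sum_le_sum_abs _ _

theorem abs_sub_sum_le_of_abs_sub_le {ι : Type*} {s : Finset ι} (hs : s.Nonempty)
    {D c : ℝ} {L α : ι → ℝ}
    (hD : ∀ i ∈ s, |D - L i| ≤ c * (α i + ∑ j ∈ s, α j))
    (hL : ∀ i ∈ s, |L i| ≤ c * α i) :
    |D - ∑ i ∈ s, L i| ≤ 2 * c * ∑ i ∈ s, α i := by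
  have hcard : (0 : ℝ) < #s := by exact_mod_cast hs.card_pos
  have hcard_sub_one : (0 : ℝ) ≤ #s - 1 := sub_nonneg.2 (by exact_mod_cast hs.card_pos)
  have hsumD : ∑ i ∈ s, |D - L i| ≤ c * ∑ i ∈ s, α i + #s * (c * ∑ i ∈ s, α i) := by
    calc ∑ i ∈ s, |D - L i| ≤ ∑ i ∈ s, c * (α i + ∑ j ∈ s, α j) := sum_le_sum hD
      _ = _ := by rw [← mul_sum, sum_add_distrib, sum_const, nsmul_eq_mul]; ring
  have hsumL : ∑ i ∈ s, |L i| ≤ c * ∑ i ∈ s, α i := by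
    rw [mul_sum]
    exact sum_le_sum hL
  refine le_of_mul_le_mul_left ?_ hcard
  calc (#s : ℝ) * |D - ∑ i ∈ s, L i|
      ≤ ∑ i ∈ s, |D - L i| + ((#s : ℝ) - 1) * ∑ i ∈ s, |L i| :=
        card_mul_abs_sub_sum_le hs D L
    _ ≤ c * ∑ i ∈ s, α i + #s * (c * ∑ i ∈ s, α i)
          + ((#s : ℝ) - 1) * (c * ∑ i ∈ s, α i) := by
        gcongr
    _ = #s * (2 * c * ∑ i ∈ s, α i) := by ring

theorem mappo_bound_combination_general {n : ℕ} (hn : 1 ≤ n) (γ D ε : ℝ)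
    (L α : Fin n → ℝ)
    (h1 : ∀ i, |D - L i| ≤ (2 * ε / (1 - γ)) * (α i + ∑ j, α j))
    (h2 : ∀ i, |L i| ≤ 2 * ε * α i / (1 - γ)) :
    |D - ∑ i, L i| ≤ (4 * ε / (1 - γ)) * ∑ i, α i := by
  have hne : (univ : Finset (Fin n)).Nonempty := univ_nonempty_iff.2 ⟨⟨0, hn⟩⟩
  have hL : ∀ i ∈ univ, |L i| ≤ (2 * ε / (1 - γ)) * α i := fun i _ =>
    (h2 i).trans_eq (mul_div_right_comm _ _ _)
  calc |D - ∑ i, L i| ≤ 2 * (2 * ε / (1 - γ)) * ∑ i, α i :=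
        abs_sub_sum_le_of_abs_sub_le hne (fun i _ => h1 i) hL
    _ = (4 * ε / (1 - γ)) * ∑ i, α i := by ring

/-- MAPPO-style bound combination. -/
theorem mappo_bound_combination {n : ℕ} (hn : 1 ≤ n) (γ D ε : ℝ)
    (hγ0 : 0 ≤ γ) (hγ1 : γ < 1) (hε : 0 ≤ ε)
    (L α : Fin n → ℝ) (hα : ∀ i, 0 ≤ α i)
    (h1 : ∀ i, |D - L i| ≤ (2 * ε / (1 - γ)) * (α i + ∑ j, α j))
    (h2 : ∀ i, |L i| ≤ 2 * ε * α i / (1 - γ)) :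
    |D - ∑ i, L i| ≤ (4 * ε / (1 - γ)) * ∑ i, α i :=
  mappo_bound_combination_general hn γ D ε L α h1 h2
end
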